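/- Every CAFE(12;G) has exactly one uniform column: for every CAFE(12;G) given by A : Fin 12 → Fin 4 → Fin 3, there exists a unique column i : Fin 4 such that every symbol s : Fin 3 occurs exactly 4 times in column i of A. -/

import Mathlib

/-!
`G` is a perfect matching of the twelve vertices: for each symbol `a`, the pairs of columns
`{i, j}` with `{(i, a), (j, a)}` an edge form a perfect matching of `K₄`. For such an edge, the
rows with `a` in column `i`, those with `a` in column `j`, and those avoiding `a` in both are
disjoint, and the last class must cover the four pairs of `{a}ᶜ × {a}ᶜ`, so
`count(i, a) + count(j, a) ≤ N - 4`. Summed over the six edges this reads `4N ≤ 6(N - 4)`; for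
`N = 12` every bound is tight, and each allowed constant pair `(b, b)` in two columns occurs in
exactly one row. By pigeonhole every row repeats a symbol, so the rows are in bijection with
the twelve allowed constant pairs ("cells") and each row is one of two explicit rows through
its cell. The cells fall into three blocks of four, indexed by a symbol `c`; a pair `(x, y)`
with `x ≠ y` in columns whose forbidden symbol is `c`, and `x, y ≠ c`, can only be covered
by a row of block `c`, and covering all of them forces one orientation for the whole block.
This leaves eight arrays up to row order, each with exactly one uniform column.
-/

/-- The forbidden-edge graph `G` on vertex set `Fin 4 × Fin 3`. -/
def EdgeSet : Set (Sym2 (Fin 4 × Fin 3)) :=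
  {s((0, 0), (1, 0)), s((2, 0), (3, 0)), s((0, 1), (2, 1)),
   s((1, 1), (3, 1)), s((0, 2), (3, 2)), s((1, 2), (2, 2))}

/-- A row `c` avoids `G` if no pair of its entries forms an edge of `G`. -/
def Avoids (c : Fin 4 → Fin 3) : Prop :=
  ∀ i j : Fin 4, i ≠ j → s((i, c i), (j, c j)) ∉ EdgeSet

/-- A covering array with forbidden edges `CAFE(N; G)`. -/
def IsCAFE {N : ℕ} (A : Fin N → Fin 4 → Fin 3) : Prop :=
  (∀ r, Avoids (A r)) ∧
  ∀ i j : Fin 4, i ≠ j → ∀ a b : Fin 3,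
    s((i, a), (j, b)) ∉ EdgeSet → ∃ r, A r i = a ∧ A r j = b

open Finset

instance : DecidablePred (· ∈ EdgeSet) := fun e => by unfold EdgeSet; infer_instance

instance : DecidablePred Avoids := fun c => by unfold Avoids; infer_instance

lemma ne_of_mem_edgeSet {i j : Fin 4} {a b : Fin 3} :
    s((i, a), (j, b)) ∈ EdgeSet → i ≠ j := by
  revert i j a b; decide

lemma exists_mem_edgeSet {i j : Fin 4} : i ≠ j → ∃ a, s((i, a), (j, a)) ∈ EdgeSet := by
  revert i j; decide

lemma eq_of_mem_edgeSet {i j : Fin 4} {a x y : Fin 3} (ha : s((i, a), (j, a)) ∈ EdgeSet) :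
    s((i, x), (j, y)) ∈ EdgeSet → x = a ∧ y = a := by
  revert i j a x y; decide

section Arrays

variable {ι κ : Type*} (A : ι → Fin 4 → Fin 3)

def CoversOffDiagonal : Prop :=
  ∀ i j, i ≠ j → ∀ x y, x ≠ y → ∃ r, A r i = x ∧ A r j = y

lemma CoversOffDiagonal.comp_equiv {A} (h : CoversOffDiagonal A) (σ : κ ≃ ι) :
    CoversOffDiagonal fun t => A (σ t) := fun i j hij x y hxy => by
  obtain ⟨r, hx, hy⟩ := h i j hij x y hxy
  exact ⟨σ.symm r, by simpa using hx, by simpa using hy⟩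

variable [Fintype ι]

def colCount (i : Fin 4) (x : Fin 3) : ℕ := #{r | A r i = x}

lemma colCount_comp_equiv [Fintype κ] (σ : κ ≃ ι) (i : Fin 4) (x : Fin 3) :
    colCount (fun t => A (σ t)) i x = colCount A i x :=
  card_equiv σ (by simp)

lemma sum_colCount (i : Fin 4) : ∑ x, colCount A i x = Fintype.card ι :=
  (card_eq_sum_card_fiberwise (f := fun r => A r i) (t := univ) (by simp)).symm

def rowsAvoiding (i j : Fin 4) (a : Fin 3) : Finset ι := {r | A r i ≠ a ∧ A r j ≠ a}

variable {A}

lemma colCount_add_colCount_add_card_rowsAvoiding (hA : ∀ r, Avoids (A r)) {i j : Fin 4}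
    {a : Fin 3} (he : s((i, a), (j, a)) ∈ EdgeSet) :
    colCount A i a + colCount A j a + #(rowsAvoiding A i j a) = Fintype.card ι := by
  rw [Fintype.card_eq_sum_ones, colCount, colCount, rowsAvoiding, card_filter, card_filter,
    card_filter, ← sum_add_distrib, ← sum_add_distrib]
  refine sum_congr rfl fun r _ => ?_
  have : ¬(A r i = a ∧ A r j = a) := fun ⟨hi, hj⟩ =>
    hA r i j (ne_of_mem_edgeSet he) (hi ▸ hj ▸ he)
  split_ifs <;> tauto

end Arrays

namespace IsCAFE

section

variable {N : ℕ} {A : Fin N → Fin 4 → Fin 3}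

lemma coversOffDiagonal (hA : IsCAFE A) : CoversOffDiagonal A := fun i j hij x y hxy => by
  refine hA.2 i j hij x y fun he => hxy ?_
  obtain ⟨a, ha⟩ := exists_mem_edgeSet hij
  obtain ⟨rfl, rfl⟩ := eq_of_mem_edgeSet ha he
  rfl

lemma subset_image_rowsAvoiding (hA : IsCAFE A) {i j : Fin 4} {a : Fin 3}
    (he : s((i, a), (j, a)) ∈ EdgeSet) :
    ({a}ᶜ ×ˢ {a}ᶜ : Finset (Fin 3 × Fin 3)) ⊆
      (rowsAvoiding A i j a).image fun r => (A r i, A r j) := by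
  rintro ⟨x, y⟩ hxy
  simp only [mem_product, mem_compl, mem_singleton] at hxy
  obtain ⟨r, hx, hy⟩ :=
    hA.2 i j (ne_of_mem_edgeSet he) x y fun h => hxy.1 (eq_of_mem_edgeSet he h).1
  exact mem_image.2 ⟨r, by simp [rowsAvoiding, hx, hy, hxy], by simp [hx, hy]⟩

lemma four_le_card_rowsAvoiding (hA : IsCAFE A) {i j : Fin 4} {a : Fin 3}
    (he : s((i, a), (j, a)) ∈ EdgeSet) : 4 ≤ #(rowsAvoiding A i j a) :=
  calc 4 = #({a}ᶜ ×ˢ {a}ᶜ : Finset (Fin 3 × Fin 3)) := by simp [card_compl]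
    _ ≤ _ := card_le_card (hA.subset_image_rowsAvoiding he)
    _ ≤ _ := card_image_le

lemma colCount_add_colCount_add_four_le (hA : IsCAFE A) {i j : Fin 4} {a : Fin 3}
    (he : s((i, a), (j, a)) ∈ EdgeSet) : colCount A i a + colCount A j a + 4 ≤ N := by
  have := colCount_add_colCount_add_card_rowsAvoiding hA.1 he
  have := hA.four_le_card_rowsAvoiding he
  rw [Fintype.card_fin] at *
  omega

end

variable {A : Fin 12 → Fin 4 → Fin 3}

lemma colCount_add_colCount_eq_eight (hA : IsCAFE A) {i j : Fin 4} {a : Fin 3}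
    (he : s((i, a), (j, a)) ∈ EdgeSet) : colCount A i a + colCount A j a = 8 := by
  -- every vertex of `G` lies on exactly one of its six edges
  have := hA.colCount_add_colCount_add_four_le (i := 0) (j := 1) (a := 0) (by decide)
  have := hA.colCount_add_colCount_add_four_le (i := 2) (j := 3) (a := 0) (by decide)
  have := hA.colCount_add_colCount_add_four_le (i := 0) (j := 2) (a := 1) (by decide)
  have := hA.colCount_add_colCount_add_four_le (i := 1) (j := 3) (a := 1) (by decide)
  have := hA.colCount_add_colCount_add_four_le (i := 0) (j := 3) (a := 2) (by decide)
  have := hA.colCount_add_colCount_add_four_le (i := 1) (j := 2) (a := 2) (by decide)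
  have total : ∀ i, colCount A i 0 + colCount A i 1 + colCount A i 2 = 12 := fun i => by
    simpa [Fin.sum_univ_three] using sum_colCount A i
  have := total 0; have := total 1; have := total 2; have := total 3
  fin_cases i <;> fin_cases j <;> fin_cases a <;>
    first | exact absurd he (by decide) | (simp only [Fin.reduceFinMk, Fin.isValue]; omega)

lemma injOn_rowsAvoiding (hA : IsCAFE A) {i j : Fin 4} {a : Fin 3}
    (he : s((i, a), (j, a)) ∈ EdgeSet) :
    Set.InjOn (fun r => (A r i, A r j)) (rowsAvoiding A i j a) := by
  apply injOn_of_card_image_eq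
  have := colCount_add_colCount_add_card_rowsAvoiding hA.1 he
  have := hA.colCount_add_colCount_eq_eight he
  have := card_le_card (hA.subset_image_rowsAvoiding he)
  have := card_image_le (s := rowsAvoiding A i j a) (f := fun r => (A r i, A r j))
  simp only [card_product, card_compl, card_singleton, Fintype.card_fin] at *
  omega

lemma eq_of_allowed_constant_pair (hA : IsCAFE A) {i j : Fin 4} {b : Fin 3} (hij : i ≠ j)
    (hb : s((i, b), (j, b)) ∉ EdgeSet) {r r' : Fin 12} (hr : A r i = b ∧ A r j = b)
    (hr' : A r' i = b ∧ A r' j = b) : r = r' := by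
  obtain ⟨a, ha⟩ := exists_mem_edgeSet hij
  have hba : b ≠ a := by rintro rfl; exact hb ha
  exact hA.injOn_rowsAvoiding ha (by simp [rowsAvoiding, hr, hba])
    (by simp [rowsAvoiding, hr', hba]) (by simp [hr, hr'])

end IsCAFE

/-- `cell (c, k) = (i, j, b)`: the `k`-th pair `i < j` of columns whose forbidden symbol `a` is
not `c`, together with the symbol `b ∉ {a, c}`. These are the twelve allowed constant pairs,
grouped into three blocks by `c`. -/
def cell : Fin 3 × Fin 4 → Fin 4 × Fin 4 × Fin 3
  | (c, k) => ![![(0, 2, 2), (0, 3, 1), (1, 2, 1), (1, 3, 2)],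
      ![(0, 1, 2), (0, 3, 0), (1, 2, 0), (2, 3, 2)],
      ![(0, 1, 1), (0, 2, 0), (1, 3, 0), (2, 3, 1)]] c k

/-- The two rows through `cell t = (i, j, b)` with no other repeated symbol: the two remaining
columns carry `c` and the forbidden symbol of `{i, j}`, in either order. The orientation is
normalised so that the covering property forces it to be constant on each block. -/
def cellRow : Fin 3 × Fin 4 → Bool → Fin 4 → Fin 3
  | (c, k), false => ![![![2, 1, 2, 0], ![1, 0, 2, 1], ![0, 1, 1, 2], ![1, 2, 0, 2]],
      ![![2, 2, 0, 1], ![0, 2, 1, 0], ![1, 0, 0, 2], ![0, 1, 2, 2]],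
      ![![1, 1, 0, 2], ![0, 2, 0, 1], ![1, 0, 2, 0], ![2, 0, 1, 1]]] c k
  | (c, k), true => ![![![2, 0, 2, 1], ![1, 2, 0, 1], ![2, 1, 1, 0], ![0, 2, 1, 2]],
      ![![2, 2, 1, 0], ![0, 1, 2, 0], ![2, 0, 0, 1], ![1, 0, 2, 2]],
      ![![1, 1, 2, 0], ![0, 1, 0, 2], ![2, 0, 1, 0], ![0, 2, 1, 1]]] c k

def Hits (row : Fin 4 → Fin 3) (t : Fin 3 × Fin 4) : Prop :=
  row (cell t).1 = (cell t).2.2 ∧ row (cell t).2.1 = (cell t).2.2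

instance (row : Fin 4 → Fin 3) : DecidablePred (Hits row) := fun _ => instDecidableAnd

lemma cell_allowed : ∀ t, (cell t).1 ≠ (cell t).2.1 ∧
    s(((cell t).1, (cell t).2.2), ((cell t).2.1, (cell t).2.2)) ∉ EdgeSet := by
  decide

lemma exists_hits_of_avoids : ∀ row, Avoids row → ∃ t, Hits row t := by
  decide

lemma exists_eq_cellRow_of_hits : ∀ row t, Avoids row → Hits row t →
    (∀ t', Hits row t' → t' = t) → ∃ e, row = cellRow t e := by
  decide

lemma block_eq_of_cellRow_covers : ∀ i j c, s((i, c), (j, c)) ∈ EdgeSet →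
    ∀ x y, x ≠ y → x ≠ c → y ≠ c →
      ∀ t e, cellRow t e i = x → cellRow t e j = y → t.1 = c := by
  decide

lemma orientation_eq_of_covers_block : ∀ (c : Fin 3) (f : Fin 4 → Bool),
    (∀ i j, s((i, c), (j, c)) ∈ EdgeSet → ∀ x y, x ≠ y → x ≠ c → y ≠ c →
      ∃ k, cellRow (c, k) (f k) i = x ∧ cellRow (c, k) (f k) j = y) → ∀ k, f k = f 0 := by
  decide

-- `∃!` spelled out, since it has no `Decidable` instance
lemma existsUnique_uniform_cellRow : ∀ β : Fin 3 → Bool,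
    ∃ i, (∀ s, colCount (fun t => cellRow t (β t.1)) i s = 4) ∧
      ∀ i', (∀ s, colCount (fun t => cellRow t (β t.1)) i' s = 4) → i' = i := by
  decide

theorem IsCAFE.exists_equiv_cellRow {A : Fin 12 → Fin 4 → Fin 3} (hA : IsCAFE A) :
    ∃ (σ : Fin 3 × Fin 4 ≃ Fin 12) (ε : Fin 3 × Fin 4 → Bool),
      ∀ t, A (σ t) = cellRow t (ε t) := by
  have huniq : ∀ {r r' t}, Hits (A r) t → Hits (A r') t → r = r' := fun h h' =>
    hA.eq_of_allowed_constant_pair (cell_allowed _).1 (cell_allowed _).2 h h'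
  choose f hf using fun r => exists_hits_of_avoids (A r) (hA.1 r)
  have hbij : Function.Bijective f := (Fintype.bijective_iff_injective_and_card f).2
    ⟨fun r r' h => huniq (hf r) (h ▸ hf r'), rfl⟩
  set σ := (Equiv.ofBijective f hbij).symm
  have hfσ : ∀ t, f (σ t) = t := (Equiv.ofBijective f hbij).apply_symm_apply
  have hσ : ∀ t, Hits (A (σ t)) t := fun t => by simpa only [hfσ] using hf (σ t)
  choose ε hε using fun t => exists_eq_cellRow_of_hits (A (σ t)) t (hA.1 _) (hσ t)
    fun t' ht' => σ.injective (huniq (hσ t') ht')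
  exact ⟨σ, ε, hε⟩

lemma eq_of_coversOffDiagonal_cellRow (ε : Fin 3 × Fin 4 → Bool)
    (h : CoversOffDiagonal fun t => cellRow t (ε t)) (t : Fin 3 × Fin 4) :
    ε t = ε (t.1, 0) := by
  obtain ⟨c, k⟩ := t
  refine orientation_eq_of_covers_block c (fun k => ε (c, k)) (fun i j he x y hxy hx hy => ?_) k
  obtain ⟨⟨c', k'⟩, hi, hj⟩ := h i j (ne_of_mem_edgeSet he) x y hxy
  obtain rfl : c' = c := block_eq_of_cellRow_covers i j c he x y hxy hx hy _ _ hi hj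
  exact ⟨k', hi, hj⟩

theorem exactly_one_uniform_column (A : Fin 12 → Fin 4 → Fin 3) (hA : IsCAFE A) :
    ∃! i : Fin 4, ∀ s : Fin 3,
      (Finset.univ.filter (fun r : Fin 12 => A r i = s)).card = 4 := by
  obtain ⟨σ, ε, hσ⟩ := hA.exists_equiv_cellRow
  have hε := eq_of_coversOffDiagonal_cellRow ε <| by
    simpa only [hσ] using hA.coversOffDiagonal.comp_equiv σ
  have hcount : ∀ i s, colCount A i s = colCount (fun t => cellRow t (ε (t.1, 0))) i s := by
    intro i s
    rw [← colCount_comp_equiv A σ]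
    simp only [hσ, ← hε]
  show ∃! i, ∀ s, colCount A i s = 4
  simp only [hcount]
  exact existsUnique_uniform_cellRow fun c => ε (c, 0)
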